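/- For the ICRM loss L(μ, τ), every sublevel set {(μ, τ) ∈ (0,1)×(0,∞) : L(μ, τ) ≤ c} is contained in a compact rectangle [ε, 1−ε] × [ε, M] ⊂ (0,1)×(0,∞) for some ε, M > 0 depending on c. -/

import Mathlib

open Real Filter Asymptotics MeasureTheory Set

/-- The digamma function `ψ(x) = d/dx log Γ(x)`. -/
noncomputable def digamma (x : ℝ) : ℝ := deriv (fun y : ℝ => Real.log (Real.Gamma y)) x

/-- The trigamma function `ψ₁ = ψ'`. -/
noncomputable def trigamma (x : ℝ) : ℝ := deriv digamma x

noncomputable def betaKL (a b a0 b0 : ℝ) : ℝ :=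
  Real.log (Real.Gamma (a + b) / (Real.Gamma a * Real.Gamma b)) -
    Real.log (Real.Gamma (a0 + b0) / (Real.Gamma a0 * Real.Gamma b0)) +
    (a - a0) * (digamma a - digamma (a + b)) +
    (b - b0) * (digamma b - digamma (a + b))

noncomputable def icrmLoss (lam a0 b0 μ τ : ℝ) : ℝ :=
  -(digamma (μ * τ) - digamma τ) + lam * betaKL (μ * τ) ((1 - μ) * τ) a0 b0




noncomputable def lgam : ℝ → ℝ := fun y : ℝ => Real.log (Real.Gamma y)

lemma deriv_lgam_eq : deriv lgam = digamma := rfl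

lemma lgam_diff {x : ℝ} (hx : 0 < x) : DifferentiableAt ℝ lgam x := by
  have h1 : DifferentiableAt ℝ Real.Gamma x :=
    Real.differentiableAt_Gamma (fun m => by have : (0:ℝ) ≤ m := Nat.cast_nonneg m; intro h; rw [h] at hx; linarith)
  exact h1.log (Real.Gamma_pos_of_pos hx).ne'

lemma hasDerivAt_lgam {x : ℝ} (hx : 0 < x) : HasDerivAt lgam (digamma x) x := by
  have := (lgam_diff hx).hasDerivAt
  rwa [deriv_lgam_eq] at this

lemma lgam_convex : ConvexOn ℝ (Ioi 0) lgam := Real.convexOn_log_Gamma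

lemma psi_mono : MonotoneOn digamma (Ioi 0) := by
  rw [← deriv_lgam_eq]
  exact lgam_convex.monotoneOn_deriv (fun x hx => lgam_diff hx)

lemma psi_le_psi {x y : ℝ} (hx : 0 < x) (hxy : x ≤ y) : digamma x ≤ digamma y :=
  psi_mono hx (lt_of_lt_of_le hx hxy) hxy

lemma lgam_slope_lb {x y : ℝ} (hx : 0 < x) (hxy : x < y) :
    digamma x * (y - x) ≤ lgam y - lgam x := by
  have h := lgam_convex.deriv_le_slope (mem_Ioi.2 hx) (mem_Ioi.2 (hx.trans hxy)) hxy (lgam_diff hx)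
  rw [deriv_lgam_eq, slope_def_field] at h
  have hyx : 0 < y - x := by linarith
  calc digamma x * (y - x) ≤ (lgam y - lgam x) / (y - x) * (y - x) := by
        exact mul_le_mul_of_nonneg_right h hyx.le
    _ = lgam y - lgam x := by field_simp

lemma lgam_slope_ub {x y : ℝ} (hx : 0 < x) (hxy : x < y) :
    lgam y - lgam x ≤ digamma y * (y - x) := by
  have h := lgam_convex.slope_le_deriv (mem_Ioi.2 hx) (mem_Ioi.2 (hx.trans hxy)) hxy
    (lgam_diff (hx.trans hxy))
  rw [deriv_lgam_eq, slope_def_field] at h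
  have hyx : 0 < y - x := by linarith
  calc lgam y - lgam x = (lgam y - lgam x) / (y - x) * (y - x) := by field_simp
    _ ≤ digamma y * (y - x) := mul_le_mul_of_nonneg_right h hyx.le

lemma lgam_tangent {x t : ℝ} (hx : 0 < x) (ht : 0 < t) :
    lgam x + digamma x * (t - x) ≤ lgam t := by
  rcases lt_trichotomy x t with h | h | h
  · have := lgam_slope_lb hx h; linarith
  · subst h; simp
  · have h1 := lgam_slope_ub ht h
    linarith


lemma lgam_add_one {x : ℝ} (hx : 0 < x) : lgam (x + 1) = lgam x + Real.log x := by
  unfold lgam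
  rw [Real.Gamma_add_one hx.ne', Real.log_mul hx.ne' (Real.Gamma_pos_of_pos hx).ne']
  ring

lemma psi_add_one {x : ℝ} (hx : 0 < x) : digamma (x + 1) = digamma x + 1 / x := by
  have h1 : HasDerivAt (fun y : ℝ => lgam (y + 1)) (digamma (x + 1)) x := by
    have := (hasDerivAt_lgam (by linarith : (0:ℝ) < x + 1)).comp x
      ((hasDerivAt_id x).add_const 1)
    simpa [Function.comp_def] using this
  have h2 : HasDerivAt (fun y : ℝ => lgam y + Real.log y) (digamma x + 1 / x) x := by
    have := (hasDerivAt_lgam hx).add (Real.hasDerivAt_log hx.ne')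
    simpa [one_div, Pi.add_def] using this
  have heq : (fun y : ℝ => lgam (y + 1)) =ᶠ[nhds x] (fun y : ℝ => lgam y + Real.log y) := by
    filter_upwards [eventually_gt_nhds hx] with y hy
    exact lgam_add_one hy
  exact (h1.congr_of_eventuallyEq heq.symm).unique h2


lemma psi_le_log {x : ℝ} (hx : 0 < x) : digamma x ≤ Real.log x := by
  have h := lgam_slope_lb hx (by linarith : x < x + 1)
  rw [lgam_add_one hx] at h
  simpa using h

lemma log_le_psi_add_one {x : ℝ} (hx : 0 < x) : Real.log x ≤ digamma (x + 1) := by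
  have h := lgam_slope_ub hx (by linarith : x < x + 1)
  rw [lgam_add_one hx] at h
  simpa using h

lemma psi_lb {x : ℝ} (hx : 0 < x) : Real.log x - 1 / x ≤ digamma x := by
  have h := log_le_psi_add_one hx
  rw [psi_add_one hx] at h
  linarith

lemma psi_ub' {x : ℝ} (hx : 0 < x) : digamma x ≤ Real.log (x + 1) - 1 / x := by
  have h := psi_le_log (by linarith : (0:ℝ) < x + 1)
  rw [psi_add_one hx] at h
  linarith

lemma lgam_two : lgam 2 = 0 := by
  have : (2:ℝ) = 1 + 1 := by norm_num
  unfold lgam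
  rw [this, Real.Gamma_add_one one_ne_zero, Real.Gamma_one]
  norm_num

lemma lgam_nonneg_of_two_le {x : ℝ} (hx : 2 ≤ x) : 0 ≤ lgam x := by
  have h2 : (0:ℝ) < 2 := by norm_num
  have ht := lgam_tangent h2 (by linarith : 0 < x)
  rw [lgam_two] at ht
  have hψ : 0 < digamma 2 := by
    have := psi_lb h2
    have hl : Real.log 2 - 1/2 > 0 := by
      have := Real.log_two_gt_d9
      linarith
    linarith
  nlinarith [hψ, sub_nonneg.2 hx]

lemma lgam_lb_crude {x : ℝ} (hx : 0 < x) : -(2 * Real.log (x + 1)) ≤ lgam x := by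
  have h1 : lgam (x + 2) = lgam x + Real.log x + Real.log (x + 1) := by
    have e1 : x + 2 = (x + 1) + 1 := by ring
    rw [e1, lgam_add_one (by linarith), lgam_add_one hx]
  have h2 : 0 ≤ lgam (x + 2) := lgam_nonneg_of_two_le (by linarith)
  have h3 : Real.log x ≤ Real.log (x + 1) := Real.log_le_log hx (by linarith)
  linarith

lemma lgam_nonpos_of_mem {x : ℝ} (h1 : 1 ≤ x) (h2 : x ≤ 2) : lgam x ≤ 0 := by
  have hc := Real.convexOn_log_Gamma.2 (mem_Ioi.2 one_pos) (mem_Ioi.2 (by norm_num : (0:ℝ) < 2))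
    (show (0:ℝ) ≤ 2 - x by linarith) (show (0:ℝ) ≤ x - 1 by linarith)
    (show (2 - x) + (x - 1) = 1 by ring)
  have e : (2 - x) • (1:ℝ) + (x - 1) • (2:ℝ) = x := by simp; ring
  rw [e] at hc
  have g1 : (Real.log ∘ Real.Gamma) 1 = 0 := by simp [Real.Gamma_one]
  have g2 : (Real.log ∘ Real.Gamma) 2 = 0 := by
    have := lgam_two; simpa [lgam] using this
  rw [g1, g2] at hc
  simpa [lgam] using hc


lemma stirling_lb (n : ℕ) (hn : 1 ≤ n) : Real.sqrt π ≤ Stirling.stirlingSeq n := by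
  have h := Stirling.tendsto_stirlingSeq_sqrt_pi
  obtain ⟨k, rfl⟩ := Nat.exists_eq_add_of_le hn
  refine le_of_tendsto h ?_
  filter_upwards [eventually_ge_atTop (1 + k)] with m hm
  obtain ⟨j, hj⟩ := Nat.exists_eq_add_of_le hm
  have h2 := Stirling.stirlingSeq'_antitone (show k ≤ k + j by omega)
  rw [hj, show 1 + k + j = (k + j) + 1 from by omega, show 1 + k = k + 1 from by omega]
  simpa [Function.comp] using h2

lemma stirling_ub (n : ℕ) (hn : 1 ≤ n) : Stirling.stirlingSeq n ≤ Real.exp 1 / Real.sqrt 2 := by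
  obtain ⟨k, rfl⟩ := Nat.exists_eq_add_of_le hn
  have := Stirling.stirlingSeq'_antitone (show 0 ≤ k by omega)
  simpa [Function.comp, show 1 + k = k + 1 by omega, Stirling.stirlingSeq_one] using this

lemma log_factorial_bounds (n : ℕ) (hn : 1 ≤ n) :
    n * Real.log n - n + Real.log n / 2 ≤ Real.log ((Nat.factorial n : ℕ) : ℝ) ∧
    Real.log ((Nat.factorial n : ℕ) : ℝ) ≤ n * Real.log n - n + Real.log n / 2 + 3 / 2 := by
  have hn0 : (0:ℝ) < n := by exact_mod_cast hn
  have hs : Stirling.stirlingSeq n = (Nat.factorial n : ℝ) / (Real.sqrt (2 * n) * ((n : ℝ) / Real.exp 1) ^ n) :=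
    rfl
  have hpos : (0:ℝ) < Real.sqrt (2 * n) * ((n : ℝ) / Real.exp 1) ^ n := by
    apply mul_pos (Real.sqrt_pos.2 (by positivity))
    exact pow_pos (div_pos hn0 (Real.exp_pos 1)) n
  have hfact : (0:ℝ) < ((Nat.factorial n : ℕ) : ℝ) := by exact_mod_cast Nat.factorial_pos n
  have hsp : (0:ℝ) < Stirling.stirlingSeq n := by
    rw [hs]; positivity
  have hlog : Real.log ((Nat.factorial n : ℕ) : ℝ) =
      Real.log (Stirling.stirlingSeq n) + (Real.log 2 + Real.log n) / 2 + n * (Real.log n - 1) := by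
    have : ((Nat.factorial n : ℕ) : ℝ) = Stirling.stirlingSeq n * (Real.sqrt (2 * n) * ((n : ℝ) / Real.exp 1) ^ n) := by
      rw [hs]; field_simp
    rw [this, Real.log_mul hsp.ne' hpos.ne', Real.log_mul (Real.sqrt_pos.2 (by positivity)).ne'
      (pow_pos (div_pos hn0 (Real.exp_pos 1)) n).ne', Real.log_sqrt (by positivity),
      Real.log_mul (by norm_num) hn0.ne', Real.log_pow, Real.log_div hn0.ne' (Real.exp_pos 1).ne',
      Real.log_exp]
    ring
  have hub : Real.log (Stirling.stirlingSeq n) ≤ 1 := by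
    have h := stirling_ub n hn
    have h2 : Real.log (Stirling.stirlingSeq n) ≤ Real.log (Real.exp 1 / Real.sqrt 2) :=
      Real.log_le_log hsp h
    rw [Real.log_div (Real.exp_pos 1).ne' (by positivity), Real.log_exp] at h2
    have : 0 ≤ Real.log (Real.sqrt 2) := Real.log_nonneg (by
      rw [show (1:ℝ) = Real.sqrt 1 by simp]
      exact Real.sqrt_le_sqrt (by norm_num))
    linarith
  have hlb : 0 ≤ Real.log (Stirling.stirlingSeq n) := by
    have h := stirling_lb n hn
    have : (1:ℝ) ≤ Real.sqrt π := by
      rw [show (1:ℝ) = Real.sqrt 1 by simp]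
      exact Real.sqrt_le_sqrt (by linarith [Real.pi_gt_three])
    exact Real.log_nonneg (le_trans this h)
  have hl2 : 0 ≤ Real.log 2 := Real.log_nonneg (by norm_num)
  have hl2' : Real.log 2 ≤ 1 := by
    have := Real.log_two_lt_d9; linarith
  constructor
  · rw [hlog]; nlinarith
  · rw [hlog]; nlinarith


lemma lgam_nat_eq (m : ℕ) : lgam ((m : ℝ) + 1) = Real.log ((Nat.factorial m : ℕ) : ℝ) := by
  unfold lgam
  rw [Real.Gamma_nat_eq_factorial]

section Ebounds
variable {x : ℝ} (hx : 2 ≤ x)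

lemma lgam_E_aux (hx : 2 ≤ x) :
    ∃ A : ℝ, 2 ≤ A ∧ A ≤ x ∧ x ≤ A + 1 ∧ 0 ≤ Real.log A ∧
      Real.log A ≤ Real.log x ∧ Real.log x ≤ Real.log A + (x - A) / A ∧
      A * Real.log A - A - Real.log A / 2 ≤ lgam A ∧
      lgam A ≤ A * Real.log A - A - Real.log A / 2 + 3 / 2 ∧
      A * Real.log A + Real.log A - A - Real.log A / 2 ≤ lgam (A + 1) ∧
      lgam (A + 1) ≤ A * Real.log A + Real.log A - A - Real.log A / 2 + 3 / 2 := by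
  have hx0 : (0:ℝ) ≤ x := by linarith
  have hp2 : 2 ≤ ⌊x⌋₊ := Nat.le_floor (by exact_mod_cast hx)
  have hpx : ((⌊x⌋₊ : ℕ) : ℝ) ≤ x := Nat.floor_le hx0
  have hxp1 : x < ((⌊x⌋₊ : ℕ) : ℝ) + 1 := Nat.lt_floor_add_one x
  obtain ⟨m, hm⟩ : ∃ m, ⌊x⌋₊ = m + 1 := ⟨⌊x⌋₊ - 1, by omega⟩
  rw [hm] at hpx hxp1 hp2
  have hm1 : 1 ≤ m := by omega
  set A : ℝ := ((m + 1 : ℕ) : ℝ) with hA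
  have hA2 : (2:ℝ) ≤ A := by rw [hA]; exact_mod_cast hp2
  have hA0 : (0:ℝ) < A := by linarith
  have hcast : A = (m : ℝ) + 1 := by push_cast [hA]; ring
  -- lgam A = log m!
  have h1 : lgam A = Real.log ((Nat.factorial m : ℕ) : ℝ) := by rw [hcast, lgam_nat_eq]
  have h2 : lgam (A + 1) = Real.log ((Nat.factorial (m+1) : ℕ) : ℝ) := by
    have : A + 1 = ((m + 1 : ℕ) : ℝ) + 1 := by rw [hA]
    rw [this, lgam_nat_eq]
  -- log (m+1)! bounds, with (m+1 : ℝ) = A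
  have hfb := log_factorial_bounds (m + 1) (by omega)
  have hfbA : A * Real.log A - A + Real.log A / 2 ≤ Real.log ((Nat.factorial (m+1) : ℕ) : ℝ) ∧
      Real.log ((Nat.factorial (m+1) : ℕ) : ℝ) ≤ A * Real.log A - A + Real.log A / 2 + 3/2 := by
    convert hfb using 3 <;> rw [hA]
  -- log m! = log (m+1)! - log A
  have hsucc : Real.log ((Nat.factorial (m+1) : ℕ) : ℝ) =
      Real.log A + Real.log ((Nat.factorial m : ℕ) : ℝ) := by
    have e : ((Nat.factorial (m+1) : ℕ) : ℝ) = A * ((Nat.factorial m : ℕ) : ℝ) := by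
      rw [hA]; push_cast [Nat.factorial_succ]; ring
    rw [e, Real.log_mul hA0.ne' (by exact_mod_cast (Nat.factorial_pos m).ne')]
  have hlogA : 0 ≤ Real.log A := Real.log_nonneg (by linarith)
  have hlogx1 : Real.log A ≤ Real.log x := Real.log_le_log hA0 hpx
  have hlogx2 : Real.log x ≤ Real.log A + (x - A) / A := by
    have hxpos : 0 < x := by linarith
    have h3 : Real.log x - Real.log A = Real.log (x / A) := (Real.log_div hxpos.ne' hA0.ne').symm
    have h4 : Real.log (x / A) ≤ x / A - 1 := Real.log_le_sub_one_of_pos (by positivity)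
    have : x / A - 1 = (x - A) / A := by field_simp
    linarith [h3, h4, this ▸ h4]
  refine ⟨A, hA2, hpx, by linarith, hlogA, hlogx1, hlogx2, ?_, ?_, ?_, ?_⟩
  · rw [h1]; linarith [hfbA.1, hsucc]
  · rw [h1]; linarith [hfbA.2, hsucc]
  · rw [h2]; linarith [hfbA.1]
  · rw [h2]; linarith [hfbA.2]

lemma lgam_E_lb (hx : 2 ≤ x) : x * Real.log x - x - Real.log x / 2 - 3 ≤ lgam x := by
  obtain ⟨A, hA2, hAx, hxA1, hlA, hl1, hl2, hgA1, hgA2, hgB1, hgB2⟩ := lgam_E_aux hx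
  have hA0 : (0:ℝ) < A := by linarith
  have hx0 : (0:ℝ) < x := by linarith
  set t := x - A with ht
  have ht0 : 0 ≤ t := by linarith
  have ht1 : t ≤ 1 := by linarith
  have htan : lgam A + digamma A * t ≤ lgam x := by
    rcases eq_or_lt_of_le hAx with h | h
    · simp [← h, ht]
    · have := lgam_tangent hA0 hx0; simpa [ht] using this
  have hψ : Real.log A - 1 / A ≤ digamma A := psi_lb hA0
  have hψt : (Real.log A - 1 / A) * t ≤ digamma A * t := mul_le_mul_of_nonneg_right hψ ht0
  -- x * log x ≤ A log A + t log A + t + t/A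
  have hxlx : x * Real.log x ≤ A * Real.log A + t * Real.log A + t + t / A := by
    have h5 : x * Real.log x ≤ x * (Real.log A + t / A) :=
      mul_le_mul_of_nonneg_left hl2 hx0.le
    have h6 : x * (Real.log A + t / A) = A * Real.log A + t * Real.log A + t + t * t / A := by
      field_simp; ring
    have htt : t * t ≤ t := by nlinarith
    have h7 : t * t / A ≤ t / A := (div_le_div_iff_of_pos_right hA0).2 htt
    linarith
  have htA : t / A ≤ 1 / 2 := by
    rw [div_le_iff₀ hA0]; linarith
  have hAA : A * A⁻¹ = 1 := mul_inv_cancel₀ hA0.ne'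
  ring_nf at htan hψt hxlx htA ht0 ht1
  linarith [htan, hψt, hgA1, hxlx, hl1, htA, hAA, ht0, ht1]

lemma lgam_E_ub (hx : 2 ≤ x) : lgam x ≤ x * Real.log x - x - Real.log x / 2 + 4 := by
  obtain ⟨A, hA2, hAx, hxA1, hlA, hl1, hl2, hgA1, hgA2, hgB1, hgB2⟩ := lgam_E_aux hx
  have hA0 : (0:ℝ) < A := by linarith
  have hx0 : (0:ℝ) < x := by linarith
  set t := x - A with ht
  have ht0 : 0 ≤ t := by linarith
  have ht1 : t ≤ 1 := by linarith
  have htan : lgam x + digamma x * (1 - t) ≤ lgam (A + 1) := by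
    have := lgam_tangent hx0 (show (0:ℝ) < A + 1 by linarith)
    have e : A + 1 - x = 1 - t := by rw [ht]; ring
    rwa [e] at this
  have hψ : Real.log A - 1 / A ≤ digamma x :=
    le_trans (psi_lb hA0) (psi_le_psi hA0 hAx)
  have hψt : (Real.log A - 1 / A) * (1 - t) ≤ digamma x * (1 - t) :=
    mul_le_mul_of_nonneg_right hψ (by linarith)
  have hxlx : A * Real.log A + t * Real.log A ≤ x * Real.log x := by
    have : x * Real.log A ≤ x * Real.log x := mul_le_mul_of_nonneg_left hl1 hx0.le
    nlinarith
  have hl2' : Real.log x ≤ Real.log A + t / A := by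
    have e : (x - A) / A = t / A := by rw [ht]
    rw [e] at hl2; exact hl2
  have htA : t / A ≤ 1 / 2 := by rw [div_le_iff₀ hA0]; linarith
  have h1A : 1 / A ≤ 1 / 2 := by rw [div_le_div_iff₀ hA0 (by norm_num)]; linarith
  have ht0' : 0 ≤ t / A := by positivity
  have hAA : A * A⁻¹ = 1 := mul_inv_cancel₀ hA0.ne'
  ring_nf at htan hψt hxlx htA h1A ht0' hl2' ht0 ht1 hgB2
  linarith [htan, hψt, hgB2, hxlx, hl2', htA, h1A, ht0', ht0, ht1, hAA, hx0.le]
end Ebounds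


noncomputable def gfun (α₀ β₀ a b : ℝ) : ℝ :=
  lgam (a + b) - lgam a - lgam b + (a - α₀) * (digamma a - digamma (a + b)) +
    (b - β₀) * (digamma b - digamma (a + b))

lemma gfun_expand (α₀ β₀ a b : ℝ) :
    gfun α₀ β₀ a b = lgam (a + b) - lgam a - lgam b + (a - α₀) * digamma a +
      (b - β₀) * digamma b - (a + b - (α₀ + β₀)) * digamma (a + b) := by
  unfold gfun; ring

/-- bounds on digamma for small argument -/
lemma psi_small_bounds {x : ℝ} (hx : 0 < x) (hx1 : x ≤ 1) :
    -1 - 1 / x ≤ digamma x ∧ digamma x ≤ 1 - 1 / x := by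
  have h1 : digamma (x + 1) = digamma x + 1 / x := psi_add_one hx
  have h2 : digamma (x + 1) ≤ Real.log (x + 1) := psi_le_log (by linarith)
  have h3 : Real.log (x + 1) - 1 / (x + 1) ≤ digamma (x + 1) := psi_lb (by linarith)
  have h4 : Real.log (x + 1) ≤ 1 := by
    have := Real.log_le_sub_one_of_pos (show (0:ℝ) < x + 1 by linarith); linarith
  have h5 : 0 ≤ Real.log (x + 1) := Real.log_nonneg (by linarith)
  have h6 : 1 / (x + 1) ≤ 1 := by
    rw [div_le_one (by linarith)]; linarith
  constructor <;> linarith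

lemma small_psi_term {x θ : ℝ} (hx : 0 < x) (hx1 : x ≤ 1) (hθ : 0 < θ) :
    θ / x - θ - 2 ≤ (x - θ) * digamma x := by
  obtain ⟨hl, hu⟩ := psi_small_bounds hx hx1
  have hxx : x * (1 / x) = 1 := by field_simp
  have h1 : x * digamma x ≥ x * (-1 - 1/x) := mul_le_mul_of_nonneg_left hl hx.le
  have h2 : θ * digamma x ≤ θ * (1 - 1/x) := mul_le_mul_of_nonneg_left hu hθ.le
  have e1 : x * (-1 - 1/x) = -x - 1 := by field_simp
  have e2 : θ * (1 - 1/x) = θ - θ/x := by ring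
  nlinarith [h1, h2]

lemma key_id (sa sb a b θ : ℝ) (ha : a ≠ 0) (hb : b ≠ 0) (hs : a + b ≠ 0)
    (hθγ : θ * ((sa^2 + sb^2) + 2*(sa*sb)) = (sa^2 + sb^2) + sa*sb) :
    θ * (sa^2 / a) + θ * (sb^2 / b) - (sa^2 + sb^2) / (a+b) - (sa*sb)/(a+b)
      = θ * (sa * b - sb * a)^2 / (a * b * (a+b)) := by
  field_simp
  linear_combination (a * b) * hθγ

lemma gfun_small (α₀ β₀ : ℝ) (hα₀ : 0 < α₀) (hβ₀ : 0 < β₀) :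
    ∃ C : ℝ, ∀ a b : ℝ, 0 < a → 0 < b → a + b ≤ 1 →
      Real.sqrt (α₀ * β₀) / (a + b) - C ≤ gfun α₀ β₀ a b := by
  obtain ⟨γ, hγ⟩ : ∃ t : ℝ, t = α₀ + β₀ := ⟨_, rfl⟩
  obtain ⟨δ, hδ⟩ : ∃ t : ℝ, t = Real.sqrt (α₀ * β₀) := ⟨_, rfl⟩
  have hδ0 : 0 < δ := hδ ▸ Real.sqrt_pos.2 (by positivity)
  have hγ0 : 0 < γ := by rw [hγ]; positivity
  obtain ⟨θ, hθdef⟩ : ∃ t : ℝ, t = (γ + δ) / (γ + 2 * δ) := ⟨_, rfl⟩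
  have hθ0 : 0 < θ := by rw [hθdef]; positivity
  have hθ1 : θ < 1 := by
    rw [hθdef, div_lt_one (by positivity)]; linarith
  refine ⟨2 * Real.log 2 + 2 * (α₀ + β₀ + 2) + (γ + 1) + γ -
    (1 + Real.log ((1 - θ) * α₀)) - (1 + Real.log ((1 - θ) * β₀)), ?_⟩
  intro a b ha hb hs
  rw [← hδ]
  have hs0 : 0 < a + b := by linarith
  have ha1 : a ≤ 1 := by linarith
  have hb1 : b ≤ 1 := by linarith
  -- Gamma bounds
  have hga : lgam a ≤ - Real.log a := by
    have := lgam_add_one ha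
    have h2 : lgam (a + 1) ≤ 0 := lgam_nonpos_of_mem (by linarith) (by linarith)
    linarith
  have hgb : lgam b ≤ - Real.log b := by
    have := lgam_add_one hb
    have h2 : lgam (b + 1) ≤ 0 := lgam_nonpos_of_mem (by linarith) (by linarith)
    linarith
  have hgs : -(2 * Real.log 2) ≤ lgam (a + b) := by
    have h1 := lgam_lb_crude hs0
    have h2 : Real.log (a + b + 1) ≤ Real.log 2 := by
      apply Real.log_le_log (by linarith) (by linarith)
    linarith
  -- linear terms for a and b
  have hta : α₀ / a - α₀ - 2 ≤ (a - α₀) * digamma a := small_psi_term ha ha1 hα₀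
  have htb : β₀ / b - β₀ - 2 ≤ (b - β₀) * digamma b := small_psi_term hb hb1 hβ₀
  -- s-term : -(s - γ) ψ(s) ≥ -γ/s - γ
  have hts : - (γ / (a+b)) - γ ≤ -((a + b - γ) * digamma (a + b)) := by
    obtain ⟨hl, hu⟩ := psi_small_bounds hs0 hs
    have hss : (a+b) * (1/(a+b)) = 1 := by field_simp
    rcases le_total (a + b) γ with h | h
    · have h1 : (γ - (a+b)) * digamma (a+b) ≥ (γ - (a+b)) * (-1 - 1/(a+b)) :=
        mul_le_mul_of_nonneg_left hl (by linarith)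
      have e : (γ - (a+b)) * (-1 - 1/(a+b)) = -(γ - (a+b)) - γ/(a+b) + 1 := by
        field_simp; ring
      nlinarith [h1]
    · have h1 : ((a+b) - γ) * digamma (a+b) ≤ ((a+b) - γ) * (1 - 1/(a+b)) :=
        mul_le_mul_of_nonneg_left hu (by linarith)
      have e : ((a+b) - γ) * (1 - 1/(a+b)) = ((a+b) - γ) - 1 + γ/(a+b) := by
        field_simp; ring
      have hγs : 0 ≤ γ / (a+b) := by positivity
      nlinarith [h1]
  -- key coercive inequality
  have h7 : δ / (a+b) ≤ θ * (α₀ / a) + θ * (β₀ / b) - γ / (a+b) := by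
    have hsa : Real.sqrt α₀ ^ 2 = α₀ := Real.sq_sqrt hα₀.le
    have hsb : Real.sqrt β₀ ^ 2 = β₀ := Real.sq_sqrt hβ₀.le
    have hδe : δ = Real.sqrt α₀ * Real.sqrt β₀ := by
      rw [hδ, ← Real.sqrt_mul hα₀.le]
    have hθγ' : θ * ((Real.sqrt α₀^2 + Real.sqrt β₀^2) + 2*(Real.sqrt α₀ * Real.sqrt β₀))
        = (Real.sqrt α₀^2 + Real.sqrt β₀^2) + Real.sqrt α₀ * Real.sqrt β₀ := by
      rw [hsa, hsb, ← hδe, ← hγ, hθdef]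
      field_simp
    have hkey := key_id (Real.sqrt α₀) (Real.sqrt β₀) a b θ ha.ne' hb.ne' hs0.ne' hθγ'
    rw [hsa, hsb, ← hδe, ← hγ] at hkey
    have hpos : 0 ≤ θ * (Real.sqrt α₀ * b - Real.sqrt β₀ * a)^2 / (a * b * (a+b)) := by
      positivity
    linarith [hkey ▸ hpos]
  -- the log-compensation
  have h8a : 1 + Real.log ((1-θ)*α₀) ≤ (1-θ)*α₀ / a + Real.log a := by
    have hk : (0:ℝ) < (1-θ)*α₀ := by nlinarith
    have := Real.log_le_sub_one_of_pos (show (0:ℝ) < ((1-θ)*α₀)/a by positivity)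
    rw [Real.log_div hk.ne' ha.ne'] at this
    linarith
  have h8b : 1 + Real.log ((1-θ)*β₀) ≤ (1-θ)*β₀ / b + Real.log b := by
    have hk : (0:ℝ) < (1-θ)*β₀ := by nlinarith
    have := Real.log_le_sub_one_of_pos (show (0:ℝ) < ((1-θ)*β₀)/b by positivity)
    rw [Real.log_div hk.ne' hb.ne'] at this
    linarith
  have hsplita : (1-θ)*α₀ / a + θ * (α₀ / a) = α₀ / a := by ring
  have hsplitb : (1-θ)*β₀ / b + θ * (β₀ / b) = β₀ / b := by ring
  rw [gfun_expand, ← hγ]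
  linarith [hga, hgb, hgs, hta, htb, hts, h7, h8a, h8b, hsplita, hsplitb]


lemma gfun_symm (α₀ β₀ a b : ℝ) : gfun α₀ β₀ a b = gfun β₀ α₀ b a := by
  unfold gfun
  rw [add_comm b a]
  ring

/-- tangent-based lower bound for the `a`-block -/
lemma block_tangent {a t α₀ : ℝ} (ha : 0 < a) (ht : 0 < t) :
    - lgam t + (t - α₀) * digamma a ≤ - lgam a + (a - α₀) * digamma a := by
  have h := lgam_tangent ha ht
  nlinarith [h]

lemma psi_abs_bound {s s₀ S : ℝ} (hs₀ : 0 < s₀) (h1 : s₀ ≤ s) (h2 : s ≤ S) :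
    |digamma s| ≤ |Real.log S| + |Real.log s₀| + 1 / s₀ := by
  have hs : 0 < s := lt_of_lt_of_le hs₀ h1
  have hub : digamma s ≤ |Real.log S| := by
    have := psi_le_log hs
    have h3 : Real.log s ≤ Real.log S := Real.log_le_log hs h2
    have := le_abs_self (Real.log S)
    linarith [psi_le_log hs, h3]
  have hlb : -(|Real.log s₀| + 1 / s₀) ≤ digamma s := by
    have h4 := psi_lb hs
    have h5 : Real.log s₀ ≤ Real.log s := Real.log_le_log hs₀ h1
    have h6 : 1 / s ≤ 1 / s₀ := by
      apply one_div_le_one_div_of_le hs₀ h1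
    have h7 := neg_abs_le (Real.log s₀)
    linarith
  rw [abs_le]
  constructor
  · have : 0 ≤ |Real.log S| := abs_nonneg _
    linarith
  · have : 0 ≤ |Real.log s₀| := abs_nonneg _
    have : 0 ≤ 1 / s₀ := by positivity
    linarith [abs_nonneg (Real.log s₀)]

lemma gfun_mid (α₀ β₀ : ℝ) (hα₀ : 0 < α₀) (hβ₀ : 0 < β₀) (s₀ S : ℝ) (hs₀ : 0 < s₀)
    (hS : s₀ ≤ S) :
    ∃ C : ℝ, ∀ a b : ℝ, 0 < a → 0 < b → a ≤ 1 → s₀ ≤ a + b → a + b ≤ S →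
      α₀ / 2 * (1 / a) - C ≤ gfun α₀ β₀ a b := by
  obtain ⟨B, hB⟩ : ∃ B : ℝ, B = |Real.log S| + |Real.log s₀| + 1 / s₀ := ⟨_, rfl⟩
  have hB0 : 0 ≤ B := by
    rw [hB]; positivity
  refine ⟨lgam (α₀/2) + lgam β₀ + α₀/2 * Real.log 2 + 2 * Real.log (S + 1) +
    (S + (α₀ + β₀)) * B, ?_⟩
  intro a b ha hb ha1 hsl hsu
  have hs : 0 < a + b := by linarith
  have hS0 : 0 < S := lt_of_lt_of_le hs₀ hS
  -- block a
  have hba : - lgam (α₀/2) + (α₀/2 - α₀) * digamma a ≤ - lgam a + (a - α₀) * digamma a :=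
    block_tangent ha (by positivity)
  have hψa : digamma a ≤ Real.log 2 - 1 / a := by
    have h1 := psi_add_one ha
    have h2 := psi_le_log (show (0:ℝ) < a + 1 by linarith)
    have h3 : Real.log (a + 1) ≤ Real.log 2 := Real.log_le_log (by linarith) (by linarith)
    linarith
  have hψa2 : (α₀/2 - α₀) * digamma a ≥ α₀/2 * (1/a) - α₀/2 * Real.log 2 := by
    have e : α₀/2 - α₀ = -(α₀/2) := by ring
    rw [e]
    have := mul_le_mul_of_nonneg_left hψa (show (0:ℝ) ≤ α₀/2 by positivity)
    nlinarith
  -- block b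
  have hbb : - lgam β₀ + (β₀ - β₀) * digamma b ≤ - lgam b + (b - β₀) * digamma b :=
    block_tangent hb hβ₀
  -- s block
  have hgs : -(2 * Real.log (S + 1)) ≤ lgam (a + b) := by
    have h1 := lgam_lb_crude hs
    have h2 : Real.log (a + b + 1) ≤ Real.log (S + 1) := Real.log_le_log (by linarith) (by linarith)
    linarith
  have hψs : |digamma (a+b)| ≤ B := by
    rw [hB]; exact psi_abs_bound hs₀ hsl hsu
  have habs : |(a + b - (α₀ + β₀)) * digamma (a+b)| ≤ (S + (α₀+β₀)) * B := by
    rw [abs_mul]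
    apply mul_le_mul _ hψs (abs_nonneg _) (by positivity)
    rw [abs_le]
    constructor <;> nlinarith [hα₀, hβ₀]
  have hterm : -((S + (α₀+β₀)) * B) ≤ -((a + b - (α₀ + β₀)) * digamma (a+b)) := by
    have := neg_abs_le ((a + b - (α₀ + β₀)) * digamma (a+b))
    have := le_abs_self ((a + b - (α₀ + β₀)) * digamma (a+b))
    linarith [habs]
  rw [gfun_expand]
  nlinarith [hba, hψa2, hbb, hgs, hterm]


/-- T3 : (α₀ - a) ψ(s) ≥ (α₀ - a) log s - α₀,  for s ≥ 1 -/
lemma T3_bound {a s α₀ : ℝ} (ha : 0 < a) (hα₀ : 0 < α₀) (hs : 1 ≤ s) :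
    (α₀ - a) * Real.log s - α₀ ≤ (α₀ - a) * digamma s := by
  have hs0 : (0:ℝ) < s := by linarith
  have h1s : 1 / s ≤ 1 := by rw [div_le_one hs0]; linarith
  have h1s0 : 0 ≤ 1 / s := by positivity
  rcases le_total a α₀ with h | h
  · have h2 := mul_le_mul_of_nonneg_left (psi_lb hs0) (show (0:ℝ) ≤ α₀ - a by linarith)
    nlinarith
  · have h2 := mul_le_mul_of_nonpos_left (psi_le_log hs0) (show α₀ - a ≤ 0 by linarith)
    nlinarith

/-- T4 : (b - β₀)(ψ(b) - ψ(s)) ≥ -a - 1  for β₀ ≤ b, s = a + b -/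
lemma T4_bound {a b β₀ : ℝ} (ha : 0 < a) (hb : 0 < b) (hβ₀ : 0 < β₀) (hbβ : β₀ ≤ b) :
    -a - 1 ≤ (b - β₀) * (digamma b - digamma (a + b)) := by
  have hs0 : 0 < a + b := by linarith
  have hX : digamma b - digamma (a + b) ≤ 0 := by
    have := psi_le_psi hb (show b ≤ a + b by linarith)
    linarith
  have step1 : b * (digamma b - digamma (a + b)) ≤ (b - β₀) * (digamma b - digamma (a + b)) :=
    mul_le_mul_of_nonpos_right (by linarith) hX
  have hlow : Real.log b - 1 / b - Real.log (a + b) ≤ digamma b - digamma (a + b) := by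
    have := psi_lb hb
    have := psi_le_log hs0
    linarith
  have step2 := mul_le_mul_of_nonneg_left hlow hb.le
  have hdiff : Real.log (a + b) - Real.log b ≤ a / b := by
    have e1 : Real.log (a + b) - Real.log b = Real.log ((a + b) / b) :=
      (Real.log_div hs0.ne' hb.ne').symm
    have e2 : Real.log ((a + b) / b) ≤ (a + b) / b - 1 :=
      Real.log_le_sub_one_of_pos (by positivity)
    have e3 : (a + b) / b - 1 = a / b := by field_simp; ring
    linarith
  have step3 : -a ≤ b * (Real.log b - Real.log (a + b)) := by
    have h4 := mul_le_mul_of_nonneg_left hdiff hb.le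
    have e4 : b * (a / b) = a := by field_simp
    nlinarith
  have e5 : b * (1 / b) = 1 := by field_simp
  nlinarith [step1, step2, step3]

/-- Case L1 : a ≤ 2, s large -/
lemma gL_small {α₀ β₀ a b : ℝ} (hα₀ : 0 < α₀) (hβ₀ : 0 < β₀) (ha : 0 < a) (hb : 0 < b)
    (ha2 : a ≤ 2) (hs16 : 16 + 2 * α₀ + 2 * β₀ ≤ a + b) :
    α₀ * Real.log (a + b) - (|lgam α₀| + α₀ + 8) ≤ gfun α₀ β₀ a b := by
  have hs0 : 0 < a + b := by linarith
  have hb2 : (a + b) / 2 ≤ b := by linarith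
  have hbβ : β₀ ≤ b := by linarith
  have hb8 : (8:ℝ) ≤ b := by linarith
  -- T1 : lgam s - lgam b ≥ a ψ(b)
  have hT1 : digamma b * a ≤ lgam (a + b) - lgam b := by
    have := lgam_slope_lb hb (show b < a + b by linarith)
    have e : a + b - b = a := by ring
    rwa [e] at this
  -- a ψ(b) ≥ a log b - 1
  have hT1b : a * Real.log b - 1 ≤ a * digamma b := by
    have h1 := mul_le_mul_of_nonneg_left (psi_lb hb) ha.le
    have h2 : a * (1 / b) ≤ 1 := by
      rw [mul_one_div, div_le_one (by linarith)]; linarith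
    nlinarith
  -- T2
  have hT2 : - lgam α₀ + (α₀ - α₀) * digamma a ≤ - lgam a + (a - α₀) * digamma a := by
    have h := lgam_tangent ha hα₀
    nlinarith [h]
  -- T3
  have hT3 := T3_bound ha hα₀ (show (1:ℝ) ≤ a + b by linarith)
  -- T4
  have hT4 := T4_bound ha hb hβ₀ hbβ
  -- a (log b - log s) ≥ -2 log 2
  have hlb : a * (Real.log b - Real.log (a + b)) ≥ -(2 * Real.log 2) := by
    have h1 : Real.log (a + b) - Real.log b ≤ Real.log 2 := by
      have e1 : Real.log (a + b) - Real.log b = Real.log ((a + b) / b) :=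
        (Real.log_div hs0.ne' hb.ne').symm
      have e2 : Real.log ((a + b) / b) ≤ Real.log 2 := by
        apply Real.log_le_log (by positivity)
        rw [div_le_iff₀ (by linarith)]; linarith
      linarith
    have h2 : 0 ≤ Real.log 2 := Real.log_nonneg (by norm_num)
    nlinarith [mul_le_mul_of_nonneg_left h1 ha.le]
  have hlog2 : Real.log 2 ≤ 1 := by
    have := Real.log_le_sub_one_of_pos (show (0:ℝ) < 2 by norm_num); linarith
  have habs : - |lgam α₀| ≤ - lgam α₀ ∨ True := Or.inr trivial
  have habs2 : lgam α₀ ≤ |lgam α₀| := le_abs_self _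
  unfold gfun
  nlinarith [hT1, hT1b, hT2, hT3, hT4, hlb, habs2, hlog2]

/-- Case L2 : 2 ≤ a ≤ √s -/
lemma gL_mid {α₀ β₀ a b : ℝ} (hα₀ : 0 < α₀) (hβ₀ : 0 < β₀) (ha : 0 < a) (hb : 0 < b)
    (ha2 : 2 ≤ a) (hasq : a^2 ≤ a + b) (hs16 : 16 + 2 * α₀ + 2 * β₀ ≤ a + b) :
    min α₀ (1/4) * Real.log (a + b) - (10 + α₀) ≤ gfun α₀ β₀ a b := by
  have hs0 : 0 < a + b := by linarith
  have hab : a ≤ b := by nlinarith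
  have hb2 : (a + b) / 2 ≤ b := by linarith
  have hT1 : digamma b * a ≤ lgam (a + b) - lgam b := by
    have := lgam_slope_lb hb (show b < a + b by linarith)
    have e : a + b - b = a := by ring
    rwa [e] at this
  have hT1b : a * Real.log b - 1 ≤ a * digamma b := by
    have h1 := mul_le_mul_of_nonneg_left (psi_lb hb) ha.le
    have h2 : a * (1 / b) ≤ 1 := by
      rw [mul_one_div, div_le_one (by linarith)]; linarith
    nlinarith
  -- block a
  have hEub := lgam_E_ub ha2
  have haψ : a * Real.log a - 1 ≤ a * digamma a := by
    have h1 := mul_le_mul_of_nonneg_left (psi_lb ha) ha.le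
    have h2 : a * (1 / a) = 1 := by field_simp
    nlinarith
  have hαψ : α₀ * digamma a ≤ α₀ * Real.log a := mul_le_mul_of_nonneg_left (psi_le_log ha) hα₀.le
  have hT3 := T3_bound ha hα₀ (show (1:ℝ) ≤ a + b by linarith)
  have hT4 := T4_bound ha hb hβ₀ (show β₀ ≤ b by linarith)
  -- a (log b - log s) ≥ -2
  have hlb : -2 ≤ a * (Real.log b - Real.log (a + b)) := by
    have hdiff : Real.log (a + b) - Real.log b ≤ a / b := by
      have e1 : Real.log (a + b) - Real.log b = Real.log ((a + b) / b) :=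
        (Real.log_div hs0.ne' hb.ne').symm
      have e2 : Real.log ((a + b) / b) ≤ (a + b) / b - 1 :=
        Real.log_le_sub_one_of_pos (by positivity)
      have e3 : (a + b) / b - 1 = a / b := by field_simp; ring
      linarith
    have h4 := mul_le_mul_of_nonneg_left hdiff ha.le
    have h5 : a * (a / b) ≤ 2 := by
      have e : a * (a / b) = a^2 / b := by ring
      rw [e, div_le_iff₀ (by linarith : (0:ℝ) < b)]
      nlinarith
    nlinarith
  -- log a bounds
  have hla0 : 0 ≤ Real.log a := Real.log_nonneg (by linarith)
  have hla2 : 2 * Real.log a ≤ Real.log (a + b) := by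
    have h1 : Real.log (a^2) ≤ Real.log (a + b) := Real.log_le_log (by positivity) hasq
    rw [Real.log_pow] at h1
    push_cast at h1
    linarith
  have hls0 : 0 ≤ Real.log (a + b) := Real.log_nonneg (by linarith)
  have hm1 : min α₀ (1/4) ≤ α₀ := min_le_left _ _
  have hm2 : min α₀ (1/4) ≤ 1/4 := min_le_right _ _
  have hmls1 : min α₀ (1/4) * Real.log (a+b) ≤ α₀ * Real.log (a+b) :=
    mul_le_mul_of_nonneg_right hm1 hls0
  have hmls2 : min α₀ (1/4) * Real.log (a+b) ≤ 1/4 * Real.log (a+b) :=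
    mul_le_mul_of_nonneg_right hm2 hls0
  unfold gfun
  rcases le_total α₀ (1/2) with hcase | hcase
  · linarith [hT1, hT1b, hEub, haψ, hαψ, hT3, hT4, hlb, hmls1,
      mul_le_mul_of_nonneg_right (show α₀ ≤ 1/2 from hcase) hla0]
  · have hflip := mul_le_mul_of_nonpos_left hla2 (show 1/2 - α₀ ≤ 0 by linarith)
    linarith [hT1, hT1b, hEub, haψ, hαψ, hT3, hT4, hlb, hmls2, hflip,
      mul_le_mul_of_nonneg_right (show (1:ℝ)/4 ≤ α₀/2 by linarith) hls0]

/-- Case L3 : √s ≤ a ≤ b -/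
lemma gL_big {α₀ β₀ a b : ℝ} (hα₀ : 0 < α₀) (hβ₀ : 0 < β₀) (ha : 0 < a) (hb : 0 < b)
    (hab : a ≤ b) (hasq : a + b ≤ a^2) (hs16 : 16 + 2 * α₀ + 2 * β₀ ≤ a + b) :
    1/4 * Real.log (a + b) - 14 ≤ gfun α₀ β₀ a b := by
  have hs0 : 0 < a + b := by linarith
  have ha4 : 4 ≤ a := by nlinarith
  have hb4 : 4 ≤ b := by linarith
  have hb2 : (a + b) / 2 ≤ b := by linarith
  have hElb := lgam_E_lb (show (2:ℝ) ≤ a + b by linarith)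
  have hEua := lgam_E_ub (show (2:ℝ) ≤ a by linarith)
  have hEub := lgam_E_ub (show (2:ℝ) ≤ b by linarith)
  -- linear terms
  have hlina : a * Real.log a - a * Real.log (a + b) - 1 ≤
      (a - α₀) * (digamma a - digamma (a + b)) := by
    have hX : digamma a - digamma (a + b) ≤ 0 := by
      have := psi_le_psi ha (show a ≤ a + b by linarith); linarith
    have step1 : a * (digamma a - digamma (a + b)) ≤ (a - α₀) * (digamma a - digamma (a + b)) :=
      mul_le_mul_of_nonpos_right (by linarith) hX
    have step2 : Real.log a - 1/a - Real.log (a + b) ≤ digamma a - digamma (a + b) := by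
      have := psi_lb ha
      have := psi_le_log hs0
      linarith
    have step3 := mul_le_mul_of_nonneg_left step2 ha.le
    have e : a * (1/a) = 1 := by field_simp
    nlinarith
  have hlinb : b * Real.log b - b * Real.log (a + b) - 1 ≤
      (b - β₀) * (digamma b - digamma (a + b)) := by
    have hX : digamma b - digamma (a + b) ≤ 0 := by
      have := psi_le_psi hb (show b ≤ a + b by linarith); linarith
    have step1 : b * (digamma b - digamma (a + b)) ≤ (b - β₀) * (digamma b - digamma (a + b)) :=
      mul_le_mul_of_nonpos_right (by linarith) hX
    have step2 : Real.log b - 1/b - Real.log (a + b) ≤ digamma b - digamma (a + b) := by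
      have := psi_lb hb
      have := psi_le_log hs0
      linarith
    have step3 := mul_le_mul_of_nonneg_left step2 hb.le
    have e : b * (1/b) = 1 := by field_simp
    nlinarith
  -- log bounds
  have hlog2 : Real.log 2 ≤ 1 := by
    have := Real.log_le_sub_one_of_pos (show (0:ℝ) < 2 by norm_num); linarith
  have hlb : Real.log (a + b) - Real.log 2 ≤ Real.log b := by
    have e1 : Real.log (a + b) - Real.log b = Real.log ((a + b) / b) :=
      (Real.log_div hs0.ne' hb.ne').symm
    have e2 : Real.log ((a + b) / b) ≤ Real.log 2 := by
      apply Real.log_le_log (by positivity)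
      rw [div_le_iff₀ (by linarith)]; linarith
    linarith
  have hla : Real.log (a + b) / 2 ≤ Real.log a := by
    have h1 : Real.log (a + b) ≤ Real.log (a^2) := Real.log_le_log hs0 hasq
    rw [Real.log_pow] at h1
    push_cast at h1
    linarith
  have hlog20 : 0 ≤ Real.log 2 := Real.log_nonneg (by norm_num)
  unfold gfun
  linarith [hElb, hEua, hEub, hlina, hlinb, hlb, hla, hlog2, hlog20]



/-- Claim S∞ -/
lemma gfun_large (α₀ β₀ : ℝ) (hα₀ : 0 < α₀) (hβ₀ : 0 < β₀) :
    ∀ a b : ℝ, 0 < a → 0 < b → 16 + 2 * α₀ + 2 * β₀ ≤ a + b →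
      min (min α₀ β₀) (1/4) * Real.log (a + b) -
        (|lgam α₀| + |lgam β₀| + α₀ + β₀ + 14) ≤ gfun α₀ β₀ a b := by
  intro a b ha hb hs16
  have hs0 : 0 < a + b := by linarith
  have hls0 : 0 ≤ Real.log (a + b) := Real.log_nonneg (by linarith)
  have hm : 0 < min (min α₀ β₀) (1/4) := by
    simp only [lt_min_iff]
    exact ⟨⟨hα₀, hβ₀⟩, by norm_num⟩
  have hma : min (min α₀ β₀) (1/4) ≤ α₀ := le_trans (min_le_left _ _) (min_le_left _ _)
  have hmb : min (min α₀ β₀) (1/4) ≤ β₀ := le_trans (min_le_left _ _) (min_le_right _ _)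
  have hm4 : min (min α₀ β₀) (1/4) ≤ 1/4 := min_le_right _ _
  have habs1 : 0 ≤ |lgam α₀| := abs_nonneg _
  have habs2 : 0 ≤ |lgam β₀| := abs_nonneg _
  have hs16' : 16 + 2 * β₀ + 2 * α₀ ≤ b + a := by linarith
  rcases le_total a 2 with hc1 | hc1
  · have h := gL_small hα₀ hβ₀ ha hb hc1 hs16
    linarith [h, mul_le_mul_of_nonneg_right hma hls0, habs1, habs2, hα₀.le, hβ₀.le]
  rcases le_total b 2 with hc2 | hc2
  · have h := gL_small hβ₀ hα₀ hb ha hc2 hs16'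
    rw [gfun_symm α₀ β₀ a b]
    rw [add_comm a b] at *
    linarith [h, mul_le_mul_of_nonneg_right hmb hls0, habs1, habs2, hα₀.le, hβ₀.le]
  rcases le_total (a^2) (a+b) with hc3 | hc3
  · have h := gL_mid hα₀ hβ₀ ha hb hc1 hc3 hs16
    have hmm : min (min α₀ β₀) (1/4) ≤ min α₀ (1/4) := le_min hma hm4
    linarith [h, mul_le_mul_of_nonneg_right hmm hls0, habs1, habs2, hα₀.le, hβ₀.le]
  rcases le_total (b^2) (a+b) with hc4 | hc4
  · have h := gL_mid hβ₀ hα₀ hb ha hc2 (by rwa [add_comm] at hc4) hs16'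
    rw [gfun_symm α₀ β₀ a b]
    have hmm : min (min α₀ β₀) (1/4) ≤ min β₀ (1/4) := le_min hmb hm4
    rw [add_comm a b] at *
    linarith [h, mul_le_mul_of_nonneg_right hmm hls0, habs1, habs2, hα₀.le, hβ₀.le]
  rcases le_total a b with hc5 | hc5
  · have h := gL_big hα₀ hβ₀ ha hb hc5 hc3 hs16
    linarith [h, mul_le_mul_of_nonneg_right hm4 hls0, habs1, habs2, hα₀.le, hβ₀.le]
  · have h := gL_big hβ₀ hα₀ hb ha hc5 (by rwa [add_comm] at hc4) hs16'
    rw [gfun_symm α₀ β₀ a b]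
    rw [add_comm a b] at *
    linarith [h, mul_le_mul_of_nonneg_right hm4 hls0, habs1, habs2, hα₀.le, hβ₀.le]


lemma inv_bound_helper {a D k : ℝ} (ha : 0 < a) (hk : 0 < k) (hD : 0 < D)
    (h : k * (1/a) ≤ D) : k/D ≤ a := by
  rw [div_le_iff₀ hD]
  have h2 := mul_le_mul_of_nonneg_right h ha.le
  rw [mul_assoc, one_div, inv_mul_cancel₀ ha.ne', mul_one] at h2
  nlinarith

lemma betaKL_eq_gfun {α₀ β₀ a b : ℝ} (hα₀ : 0 < α₀) (hβ₀ : 0 < β₀) (ha : 0 < a) (hb : 0 < b) :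
    betaKL a b α₀ β₀ = gfun α₀ β₀ a b - (lgam (α₀ + β₀) - lgam α₀ - lgam β₀) := by
  have g1 : (0:ℝ) < Real.Gamma (a + b) := Real.Gamma_pos_of_pos (by linarith)
  have g2 : (0:ℝ) < Real.Gamma a := Real.Gamma_pos_of_pos ha
  have g3 : (0:ℝ) < Real.Gamma b := Real.Gamma_pos_of_pos hb
  have g4 : (0:ℝ) < Real.Gamma (α₀ + β₀) := Real.Gamma_pos_of_pos (by linarith)
  have g5 : (0:ℝ) < Real.Gamma α₀ := Real.Gamma_pos_of_pos hα₀
  have g6 : (0:ℝ) < Real.Gamma β₀ := Real.Gamma_pos_of_pos hβ₀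
  unfold betaKL gfun lgam
  rw [Real.log_div g1.ne' (by positivity), Real.log_mul g2.ne' g3.ne',
    Real.log_div g4.ne' (by positivity), Real.log_mul g5.ne' g6.ne']
  ring

/-- Every sublevel set of the ICRM loss is contained in a compact rectangle
`[ε, 1−ε] × [ε, M] ⊂ (0,1) × (0,∞)`. -/
theorem icrm_sublevel_compact (lam α₀ β₀ : ℝ)
    (hlam : 0 < lam) (hα₀ : 0 < α₀) (hβ₀ : 0 < β₀) (c : ℝ) :
    ∃ ε M : ℝ, 0 < ε ∧ ε < 1 - ε ∧ ε ≤ M ∧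
      {p : ℝ × ℝ | p ∈ Set.Ioo (0:ℝ) 1 ×ˢ Set.Ioi (0:ℝ) ∧
          icrmLoss lam α₀ β₀ p.1 p.2 ≤ c} ⊆
        Set.Icc ε (1 - ε) ×ˢ Set.Icc ε M := by
  obtain ⟨c', hc'⟩ : ∃ t : ℝ, t = c / lam + (lgam (α₀ + β₀) - lgam α₀ - lgam β₀) := ⟨_, rfl⟩
  -- reduction : on the sublevel set, gfun ≤ c'
  have key : ∀ μ τ : ℝ, 0 < μ → μ < 1 → 0 < τ → icrmLoss lam α₀ β₀ μ τ ≤ c →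
      gfun α₀ β₀ (μ * τ) ((1 - μ) * τ) ≤ c' := by
    intro μ τ hμ0 hμ1 hτ hL
    have ha : 0 < μ * τ := by positivity
    have hb : 0 < (1 - μ) * τ := by nlinarith
    have e : μ * τ + (1 - μ) * τ = τ := by ring
    have hψ : digamma (μ * τ) ≤ digamma τ := psi_le_psi ha (by nlinarith)
    have hKL := betaKL_eq_gfun hα₀ hβ₀ ha hb
    unfold icrmLoss at hL
    rw [hKL] at hL
    have h2 : lam * (gfun α₀ β₀ (μ * τ) ((1 - μ) * τ) - (lgam (α₀ + β₀) - lgam α₀ - lgam β₀)) ≤ c := by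
      linarith [hL, hψ]
    rw [mul_comm] at h2
    have h4 := (le_div_iff₀ hlam).2 h2
    rw [hc']
    linarith
  -- constants
  obtain ⟨C0, hC0⟩ := gfun_small α₀ β₀ hα₀ hβ₀
  obtain ⟨m, hm⟩ : ∃ t : ℝ, t = min (min α₀ β₀) (1/4) := ⟨_, rfl⟩
  have hm0 : 0 < m := by
    rw [hm]; exact lt_min (lt_min hα₀ hβ₀) (by norm_num)
  obtain ⟨CL, hCL⟩ : ∃ t : ℝ, t = |lgam α₀| + |lgam β₀| + α₀ + β₀ + 14 := ⟨_, rfl⟩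
  obtain ⟨M, hMdef⟩ : ∃ t : ℝ, t = 16 + 2*α₀ + 2*β₀ + Real.exp ((c' + CL + 1)/m) := ⟨_, rfl⟩
  have hM16 : 16 ≤ M := by
    rw [hMdef]; nlinarith [Real.exp_pos ((c' + CL + 1)/m)]
  have hMexp : Real.exp ((c' + CL + 1)/m) ≤ M := by
    rw [hMdef]; nlinarith
  have hM0 : (0:ℝ) < M := by linarith
  -- upper bound on τ
  have hτM : ∀ μ τ : ℝ, 0 < μ → μ < 1 → 0 < τ → icrmLoss lam α₀ β₀ μ τ ≤ c → τ ≤ M := by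
    intro μ τ hμ0 hμ1 hτ hL
    by_contra hcon
    push_neg at hcon
    have ha : 0 < μ * τ := by positivity
    have hb : 0 < (1 - μ) * τ := by nlinarith
    have e : μ * τ + (1 - μ) * τ = τ := by ring
    have hlarge := gfun_large α₀ β₀ hα₀ hβ₀ (μ * τ) ((1 - μ) * τ) ha hb
      (by rw [e]; have := Real.exp_pos ((c' + CL + 1)/m); linarith)
    rw [e, ← hCL] at hlarge
    have hlogτ : (c' + CL + 1)/m ≤ Real.log τ := by
      rw [Real.le_log_iff_exp_le hτ]
      linarith
    have h5 : c' + CL + 1 ≤ Real.log τ * m := (div_le_iff₀ hm0).1 hlogτ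
    have h6 := key μ τ hμ0 hμ1 hτ hL
    rw [← hm] at hlarge
    nlinarith [hlarge, h6, h5]
  -- lower bound on τ
  obtain ⟨s₀, hs₀def⟩ : ∃ t : ℝ, t = min 1 (Real.sqrt (α₀*β₀)/(|c'| + |C0| + 1)) := ⟨_, rfl⟩
  have hδ0 : 0 < Real.sqrt (α₀*β₀) := Real.sqrt_pos.2 (by positivity)
  have hD0 : (0:ℝ) < |c'| + |C0| + 1 := by positivity
  have hs₀0 : 0 < s₀ := by
    rw [hs₀def]; exact lt_min one_pos (by positivity)
  have hs₀1 : s₀ ≤ 1 := by rw [hs₀def]; exact min_le_left _ _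
  have hτs : ∀ μ τ : ℝ, 0 < μ → μ < 1 → 0 < τ → icrmLoss lam α₀ β₀ μ τ ≤ c → s₀ ≤ τ := by
    intro μ τ hμ0 hμ1 hτ hL
    rcases le_total 1 τ with h | h
    · linarith
    · have ha : 0 < μ * τ := by positivity
      have hb : 0 < (1 - μ) * τ := by nlinarith
      have e : μ * τ + (1 - μ) * τ = τ := by ring
      have hsmall := hC0 (μ * τ) ((1 - μ) * τ) ha hb (by rw [e]; linarith)
      rw [e] at hsmall
      have h6 := key μ τ hμ0 hμ1 hτ hL
      have h7 : Real.sqrt (α₀*β₀) / τ ≤ |c'| + |C0| + 1 := by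
        have := le_abs_self c'
        have := le_abs_self C0
        have := neg_abs_le C0
        linarith
      have h8 : Real.sqrt (α₀*β₀) ≤ (|c'| + |C0| + 1) * τ := by
        rw [div_le_iff₀ hτ] at h7; linarith [h7]
      have h9 : Real.sqrt (α₀*β₀)/(|c'| + |C0| + 1) ≤ τ := by
        rw [div_le_iff₀ hD0]; linarith
      rw [hs₀def]
      exact le_trans (min_le_right _ _) h9
  have hs₀M : s₀ ≤ M := by linarith
  -- lower bounds on a and b
  obtain ⟨CA, hCA⟩ := gfun_mid α₀ β₀ hα₀ hβ₀ s₀ M hs₀0 hs₀M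
  obtain ⟨CB, hCB⟩ := gfun_mid β₀ α₀ hβ₀ hα₀ s₀ M hs₀0 hs₀M
  obtain ⟨a₀, ha₀def⟩ : ∃ t : ℝ, t = min 1 (α₀/(2*(|c'| + |CA| + 1))) := ⟨_, rfl⟩
  obtain ⟨b₀, hb₀def⟩ : ∃ t : ℝ, t = min 1 (β₀/(2*(|c'| + |CB| + 1))) := ⟨_, rfl⟩
  have hDA : (0:ℝ) < |c'| + |CA| + 1 := by positivity
  have hDB : (0:ℝ) < |c'| + |CB| + 1 := by positivity
  have ha₀0 : 0 < a₀ := by rw [ha₀def]; exact lt_min one_pos (by positivity)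
  have hb₀0 : 0 < b₀ := by rw [hb₀def]; exact lt_min one_pos (by positivity)
  have hcore : ∀ μ τ : ℝ, 0 < μ → μ < 1 → 0 < τ → icrmLoss lam α₀ β₀ μ τ ≤ c →
      a₀ ≤ μ * τ ∧ b₀ ≤ (1 - μ) * τ := by
    intro μ τ hμ0 hμ1 hτ hL
    have ha : 0 < μ * τ := by positivity
    have hb : 0 < (1 - μ) * τ := by nlinarith
    have e : μ * τ + (1 - μ) * τ = τ := by ring
    have e' : (1 - μ) * τ + μ * τ = τ := by ring
    have h6 := key μ τ hμ0 hμ1 hτ hL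
    have hτ1 := hτs μ τ hμ0 hμ1 hτ hL
    have hτ2 := hτM μ τ hμ0 hμ1 hτ hL
    constructor
    · rcases le_total 1 (μ * τ) with h | h
      · rw [ha₀def]; exact le_trans (min_le_left _ _) h
      · have hmid := hCA (μ * τ) ((1 - μ) * τ) ha hb h (by rw [e]; exact hτ1) (by rw [e]; exact hτ2)
        have h7 : α₀/2 * (1/(μ * τ)) ≤ |c'| + |CA| + 1 := by
          have := le_abs_self c'
          have := le_abs_self CA
          have := neg_abs_le CA
          linarith
        have h9 : α₀/(2*(|c'| + |CA| + 1)) ≤ μ * τ := by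
          rw [← div_div]
          exact inv_bound_helper ha (by positivity) hDA h7
        rw [ha₀def]
        exact le_trans (min_le_right _ _) h9
    · rcases le_total 1 ((1 - μ) * τ) with h | h
      · rw [hb₀def]; exact le_trans (min_le_left _ _) h
      · have hmid := hCB ((1 - μ) * τ) (μ * τ) hb ha h (by rw [e']; exact hτ1)
          (by rw [e']; exact hτ2)
        have h6' : gfun β₀ α₀ ((1-μ)*τ) (μ*τ) ≤ c' := by
          rw [← gfun_symm]; exact h6
        have h7 : β₀/2 * (1/((1 - μ) * τ)) ≤ |c'| + |CB| + 1 := by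
          have := le_abs_self c'
          have := le_abs_self CB
          have := neg_abs_le CB
          linarith
        have h9 : β₀/(2*(|c'| + |CB| + 1)) ≤ (1 - μ) * τ := by
          rw [← div_div]
          exact inv_bound_helper hb (by positivity) hDB h7
        rw [hb₀def]
        exact le_trans (min_le_right _ _) h9
  -- choose ε
  obtain ⟨ε, hεdef⟩ : ∃ t : ℝ, t = min (min (a₀/M) (b₀/M)) (min s₀ (1/4)) := ⟨_, rfl⟩
  have hε0 : 0 < ε := by
    rw [hεdef]
    exact lt_min (lt_min (by positivity) (by positivity)) (lt_min hs₀0 (by norm_num))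
  have hε14 : ε ≤ 1/4 := by
    rw [hεdef]; exact le_trans (min_le_right _ _) (min_le_right _ _)
  have hεs₀ : ε ≤ s₀ := by
    rw [hεdef]; exact le_trans (min_le_right _ _) (min_le_left _ _)
  have hεa : ε ≤ a₀/M := by
    rw [hεdef]; exact le_trans (min_le_left _ _) (min_le_left _ _)
  have hεb : ε ≤ b₀/M := by
    rw [hεdef]; exact le_trans (min_le_left _ _) (min_le_right _ _)
  refine ⟨ε, M, hε0, by linarith, by linarith, ?_⟩
  rintro ⟨μ, τ⟩ ⟨⟨hμmem, hτmem⟩, hL⟩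
  simp only [Set.mem_Ioo, Set.mem_Ioi] at hμmem hτmem
  obtain ⟨hμ0, hμ1⟩ := hμmem
  have hτ0 : 0 < τ := hτmem
  have hL' : icrmLoss lam α₀ β₀ μ τ ≤ c := hL
  obtain ⟨hA, hB⟩ := hcore μ τ hμ0 hμ1 hτ0 hL'
  have hτ2 := hτM μ τ hμ0 hμ1 hτ0 hL'
  have hτ1 := hτs μ τ hμ0 hμ1 hτ0 hL'
  have hμlow : a₀/M ≤ μ := by
    rw [div_le_iff₀ hM0]
    have := mul_le_mul_of_nonneg_left hτ2 hμ0.le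
    linarith [hA]
  have hμhigh : b₀/M ≤ 1 - μ := by
    rw [div_le_iff₀ hM0]
    have := mul_le_mul_of_nonneg_left hτ2 (show (0:ℝ) ≤ 1 - μ by linarith)
    linarith [hB]
  refine ⟨⟨by linarith, by linarith⟩, by constructor <;> simp <;> linarith⟩
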